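/- arXiv:math/0702604 — 2 statements merged into one kernel-verified Lean document; each statement's English description precedes it below -/
import Mathlib

section
/- Let C be a coalgebra over a field and M a C-bicomodule. The cotensor coalgebra T^c_C(M) = ⊕_{n∈ℕ} M^{□_C n}, with comultiplication components Δ_{m,n} given by the canonical inclusions M^{□(m+n)} → M^{□m} ⊗ M^{□n} (and by the coactions / comultiplication of C in degrees involving 0), is a strongly ℕ-graded coalgebra: every component Δ_{m,n} is injective. -/
open TensorProduct DirectSum

universe u

variable (k : Type u) [Field k]

/-- Transport along an equality of indices. -/
def lcast (T : ℕ → Type u) [∀ n, AddCommGroup (T n)] [∀ n, Module k (T n)]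
    {m n : ℕ} (h : m = n) : T m ≃ₗ[k] T n := by
  subst h; exact LinearEquiv.refl k (T m)

/-- `lcast` of a symmetric equality is the inverse equivalence. -/
theorem lcast_symm (T : ℕ → Type u) [∀ n, AddCommGroup (T n)] [∀ n, Module k (T n)]
    {m n : ℕ} (h : m = n) : lcast k T h.symm = (lcast k T h).symm := by
  subst h; rfl

/-- Let `C` be a coalgebra over a field and `M` a `C`-bicomodule. The cotensor
coalgebra `T^c_C(M) = ⊕_{n∈ℕ} M^{□_C n}` is a strongly ℕ-graded coalgebra: every component
`Δ_{m,n}` of its comultiplication is injective.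

Here the cotensor coalgebra is encoded as a graded coalgebra `T = ⊕ T_n` (with `T_0 = C`,
`T_1 = M`, and coactions `Δ_{0,n}`, `Δ_{n,0}`) such that for every `n` the component
`Δ_{1,n} : M^{□(n+1)} → M ⊗ M^{□n}` is the canonical inclusion of the cotensor product, i.e. it
is injective with image the equalizer of `ρ^r ⊗ id` and `id ⊗ λ_n`. -/
theorem stmt11 (T : ℕ → Type u) [∀ n, AddCommGroup (T n)] [∀ n, Module k (T n)]
    [Coalgebra k (⨁ n, T n)]
    (Δab : ∀ a b : ℕ, T (a + b) →ₗ[k] T a ⊗[k] T b)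
    (hgr : ∀ n : ℕ, Coalgebra.comul ∘ₗ DirectSum.lof k ℕ T n =
      ∑ p ∈ (Finset.HasAntidiagonal.antidiagonal n).attach,
        (TensorProduct.map (DirectSum.lof k ℕ T p.1.1) (DirectSum.lof k ℕ T p.1.2)) ∘ₗ
          Δab p.1.1 p.1.2 ∘ₗ
            (lcast k T (Finset.HasAntidiagonal.mem_antidiagonal.mp p.2).symm).toLinearMap)
    -- `T_{n+1}`, via `Δ_{1,n}`, is the cotensor product `M □_C M^{□n}`:
    (hcot : ∀ n : ℕ,
      Function.Injective (Δab 1 n) ∧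
      LinearMap.range (Δab 1 n) =
        LinearMap.ker
          ((TensorProduct.assoc k (T 1) (T 0) (T n)).toLinearMap ∘ₗ
              (Δab 1 0).rTensor (T n) -
            (Δab 0 n ∘ₗ (lcast k T (Nat.zero_add n).symm).toLinearMap).lTensor (T 1))) :
    ∀ m n : ℕ, Function.Injective (Δab m n) := by
  classical
  set A := ⨁ n, T n with hA
  let π : ∀ a : ℕ, A →ₗ[k] T a := fun a => DirectSum.component k ℕ T a
  have hπ0 : ∀ {a p : ℕ}, p ≠ a → (π a) ∘ₗ (DirectSum.lof k ℕ T p) = 0 := by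
    intro a p h
    ext x
    simp only [LinearMap.comp_apply, LinearMap.zero_apply, π]
    rw [DirectSum.component.of]
    exact dif_neg h
  have hπ1 : ∀ a : ℕ, (π a) ∘ₗ (DirectSum.lof k ℕ T a) = LinearMap.id := by
    intro a
    ext x
    simp only [LinearMap.comp_apply, LinearMap.id_apply, π]
    exact DirectSum.component.lof_self (R := k) (ι := ℕ) (M := T) a x
  -- components of comul
  have hD1 : ∀ (a b : ℕ) (x : T (a + b)),
      TensorProduct.map (π a) (π b) (Coalgebra.comul (R := k) (DirectSum.lof k ℕ T (a + b) x))
        = Δab a b x := by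
    intro a b x
    have e := LinearMap.congr_fun (hgr (a + b)) x
    simp only [LinearMap.comp_apply] at e
    rw [e, LinearMap.sum_apply, map_sum]
    rw [Finset.sum_eq_single_of_mem
      (⟨(a, b), Finset.HasAntidiagonal.mem_antidiagonal.mpr rfl⟩ :
        {p // p ∈ Finset.HasAntidiagonal.antidiagonal (a + b)}) (Finset.mem_attach _ _)]
    · simp only [LinearMap.comp_apply, LinearEquiv.coe_coe]
      rw [← LinearMap.comp_apply, ← TensorProduct.map_comp, hπ1, hπ1,
        TensorProduct.map_id]
      rfl
    · rintro ⟨⟨p1, p2⟩, hp⟩ _ hne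
      have hne' : p1 ≠ a ∨ p2 ≠ b := by
        by_contra hc
        push_neg at hc
        exact hne (by simp [hc.1, hc.2])
      simp only [LinearMap.comp_apply, LinearEquiv.coe_coe]
      rw [← LinearMap.comp_apply, ← TensorProduct.map_comp]
      rcases hne' with h' | h'
      · rw [hπ0 h', TensorProduct.map_zero_left]; rfl
      · rw [hπ0 h', TensorProduct.map_zero_right]; rfl
  have hD1' : ∀ a b : ℕ,
      TensorProduct.map (π a) (π b) ∘ₗ Coalgebra.comul ∘ₗ DirectSum.lof k ℕ T (a + b)
        = Δab a b := fun a b => LinearMap.ext (hD1 a b)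
  -- the component form of coassociativity
  have hB : ∀ (a b c : ℕ) (x : T (a + b + c)),
      (TensorProduct.assoc k (T a) (T b) (T c))
          ((Δab a b).rTensor (T c) (Δab (a + b) c x)) =
        (Δab b c).lTensor (T a) (Δab a (b + c) (lcast k T (Nat.add_assoc a b c) x)) := by
    intro a b c x
    have e := congrArg (TensorProduct.map (π a) (TensorProduct.map (π b) (π c)))
      (Coalgebra.coassoc_apply (R := k) (DirectSum.lof k ℕ T (a + b + c) x))
    rw [TensorProduct.map_map_assoc] at e
    have ecomul := LinearMap.congr_fun (hgr (a + b + c)) x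
    simp only [LinearMap.comp_apply] at ecomul
    rw [ecomul, LinearMap.sum_apply, map_sum, map_sum, map_sum, map_sum, map_sum] at e
    rw [Finset.sum_eq_single_of_mem
        (⟨(a + b, c), Finset.HasAntidiagonal.mem_antidiagonal.mpr rfl⟩ :
          {p // p ∈ Finset.HasAntidiagonal.antidiagonal (a + b + c)}) (Finset.mem_attach _ _) ?side1,
      Finset.sum_eq_single_of_mem
        (⟨(a, b + c), Finset.HasAntidiagonal.mem_antidiagonal.mpr (Nat.add_assoc a b c).symm⟩ :
          {p // p ∈ Finset.HasAntidiagonal.antidiagonal (a + b + c)}) (Finset.mem_attach _ _) ?side2] at e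
    · -- identify the two surviving terms with the statement
      simp only [LinearMap.comp_apply, LinearEquiv.coe_coe] at e
      rw [← LinearMap.comp_apply (LinearMap.rTensor _ Coalgebra.comul),
        LinearMap.rTensor_comp_map, ← LinearMap.comp_apply (TensorProduct.map _ _),
        ← TensorProduct.map_comp,
        ← LinearMap.comp_apply (LinearMap.lTensor _ Coalgebra.comul),
        LinearMap.lTensor_comp_map,
        ← LinearMap.comp_apply (TensorProduct.map (π a) (TensorProduct.map (π b) (π c))),
        ← TensorProduct.map_comp, hπ1, hπ1, hD1', hD1'] at e
      exact e
    case side1 =>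
      rintro ⟨⟨p1, p2⟩, hp⟩ _ hne
      have h2 : p2 ≠ c := by
        intro hc
        subst hc
        have hp1 : p1 = a + b := Nat.add_right_cancel (Finset.HasAntidiagonal.mem_antidiagonal.mp hp)
        exact hne (by simp only [Subtype.mk.injEq, Prod.mk.injEq]; exact ⟨hp1, trivial⟩)
      simp only [LinearMap.comp_apply, LinearEquiv.coe_coe]
      rw [← LinearMap.comp_apply (LinearMap.rTensor _ Coalgebra.comul),
        LinearMap.rTensor_comp_map, ← LinearMap.comp_apply (TensorProduct.map _ _),
        ← TensorProduct.map_comp, hπ0 h2, TensorProduct.map_zero_right]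
      rfl
    case side2 =>
      rintro ⟨⟨p1, p2⟩, hp⟩ _ hne
      have h1 : p1 ≠ a := by
        intro hc
        have hh := Finset.HasAntidiagonal.mem_antidiagonal.mp hp
        rw [hc] at hh
        have hp2 : p2 = b + c := Nat.add_left_cancel (hh.trans (Nat.add_assoc a b c))
        exact hne (by simp only [Subtype.mk.injEq, Prod.mk.injEq]; exact ⟨hc, hp2⟩)
      simp only [LinearMap.comp_apply, LinearEquiv.coe_coe]
      rw [← LinearMap.comp_apply (LinearMap.lTensor _ Coalgebra.comul),
        LinearMap.lTensor_comp_map, ← LinearMap.comp_apply (TensorProduct.map _ _),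
        ← TensorProduct.map_comp, hπ0 h1, TensorProduct.map_zero_left]
      rfl
  -- injectivity of Δ_{0,n} via the counit
  have h0 : ∀ n : ℕ, Function.Injective (Δab 0 n) := by
    intro n
    rw [injective_iff_map_eq_zero]
    intro y hy
    set x : T n := (lcast k T (Nat.zero_add n)) y with hxdef
    have hx : TensorProduct.map (Coalgebra.counit (R := k)) (π n)
        (Coalgebra.comul (R := k) (DirectSum.lof k ℕ T n x)) = (1 : k) ⊗ₜ[k] x := by
      rw [← LinearMap.lTensor_comp_rTensor, LinearMap.comp_apply,
        Coalgebra.rTensor_counit_comul]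
      simp only [LinearMap.lTensor_tmul]
      congr 1
      exact DirectSum.component.lof_self (R := k) (ι := ℕ) (M := T) n _
    have hx2 : TensorProduct.map (Coalgebra.counit (R := k)) (π n)
        (Coalgebra.comul (R := k) (DirectSum.lof k ℕ T n x)) = 0 := by
      have e := LinearMap.congr_fun (hgr n) x
      simp only [LinearMap.comp_apply] at e
      rw [e, LinearMap.sum_apply, map_sum]
      refine Finset.sum_eq_zero ?_
      rintro ⟨⟨p1, p2⟩, hp⟩ -
      simp only [LinearMap.comp_apply, LinearEquiv.coe_coe]
      by_cases h2 : p2 = n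
      · -- then p1 = 0 and the term vanishes because Δab 0 n y = 0
        subst h2
        have hp1 : p1 = 0 := by
          have := Finset.HasAntidiagonal.mem_antidiagonal.mp hp
          omega
        subst hp1
        have hyy : (lcast k T (Finset.HasAntidiagonal.mem_antidiagonal.mp
            (show ((0 : ℕ), p2) ∈ Finset.HasAntidiagonal.antidiagonal p2 from hp)).symm) x = y := by
          show (lcast k T (Nat.zero_add p2).symm) ((lcast k T (Nat.zero_add p2)) y) = y
          rw [lcast_symm]
          exact (lcast k T (Nat.zero_add p2)).symm_apply_apply y
        rw [hyy, hy, map_zero, map_zero]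
      · rw [← LinearMap.comp_apply (TensorProduct.map _ _), ← TensorProduct.map_comp,
          hπ0 h2, TensorProduct.map_zero_right]
        rfl
    have hx3 : (1 : k) ⊗ₜ[k] x = 0 := hx.symm.trans hx2
    have hx4 : x = 0 := by
      have := congrArg (TensorProduct.lid k (T n)) hx3
      simpa using this
    exact (LinearEquiv.map_eq_zero_iff (lcast k T (Nat.zero_add n))).mp hx4
  -- transport injectivity along index equalities
  have htrans : ∀ {m m' : ℕ}, m = m' → ∀ n : ℕ,
      Function.Injective (Δab m n) → Function.Injective (Δab m' n) := by
    intro m m' h n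
    subst h
    exact id
  intro m
  induction m with
  | zero => exact h0
  | succ m ih =>
    intro n
    refine htrans (Nat.add_comm 1 m) n ?_
    intro x x' hxx
    have hinj : Function.Injective ((Δab m n).lTensor (T 1)) :=
      Module.Flat.lTensor_preserves_injective_linearMap (M := T 1) _ (ih n)
    have e : (Δab m n).lTensor (T 1) (Δab 1 (m + n) (lcast k T (Nat.add_assoc 1 m n) x))
        = (Δab m n).lTensor (T 1) (Δab 1 (m + n) (lcast k T (Nat.add_assoc 1 m n) x')) := by
      rw [← hB 1 m n x, ← hB 1 m n x', hxx]
    have e2 := (hcot (m + n)).1 (hinj e)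
    exact (lcast k T (Nat.add_assoc 1 m n)).injective e2
end

section
/- Let C be a coalgebra over a field, M a C-bicomodule, and T^c = T^c_C(M) the cotensor coalgebra. If E is any coalgebra and α, β : E → T^c are coalgebra homomorphisms with p_0 ∘ α = p_0 ∘ β and p_1 ∘ α = p_1 ∘ β, then α = β. -/
open TensorProduct DirectSum

universe u

variable (k : Type u) [Field k]

/-- Let `C` be a coalgebra over a field, `M` a `C`-bicomodule, and
`T^c = T^c_C(M)` the cotensor coalgebra, encoded as a graded coalgebra `T = ⊕ T_n` with `T_0 = C`
and `T_1 = M`, such that each `Δ_{1,n}` is the canonical (injective) inclusion of the cotensor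
product `M □_C M^{□n}`. If `E` is a coalgebra and `α, β : E → T^c` are coalgebra homomorphisms
with `p_0 ∘ α = p_0 ∘ β` and `p_1 ∘ α = p_1 ∘ β`, then `α = β`. -/
theorem stmt12 (T : ℕ → Type u) [∀ n, AddCommGroup (T n)] [∀ n, Module k (T n)]
    [Coalgebra k (⨁ n, T n)]
    (Δab : ∀ a b : ℕ, T (a + b) →ₗ[k] T a ⊗[k] T b)
    (hgr : ∀ n : ℕ, Coalgebra.comul ∘ₗ DirectSum.lof k ℕ T n =
      ∑ p ∈ (Finset.HasAntidiagonal.antidiagonal n).attach,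
        (TensorProduct.map (DirectSum.lof k ℕ T p.1.1) (DirectSum.lof k ℕ T p.1.2)) ∘ₗ
          Δab p.1.1 p.1.2 ∘ₗ
            (lcast k T (Finset.HasAntidiagonal.mem_antidiagonal.mp p.2).symm).toLinearMap)
    (hcot : ∀ n : ℕ,
      Function.Injective (Δab 1 n) ∧
      LinearMap.range (Δab 1 n) =
        LinearMap.ker
          ((TensorProduct.assoc k (T 1) (T 0) (T n)).toLinearMap ∘ₗ
              (Δab 1 0).rTensor (T n) -
            (Δab 0 n ∘ₗ (lcast k T (Nat.zero_add n).symm).toLinearMap).lTensor (T 1)))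
    (E : Type u) [AddCommGroup E] [Module k E] [Coalgebra k E]
    (α β : E →ₗ[k] ⨁ n, T n)
    (hα₁ : Coalgebra.comul ∘ₗ α = (TensorProduct.map α α) ∘ₗ Coalgebra.comul)
    (hα₂ : (Coalgebra.counit : (⨁ n, T n) →ₗ[k] k) ∘ₗ α = Coalgebra.counit)
    (hβ₁ : Coalgebra.comul ∘ₗ β = (TensorProduct.map β β) ∘ₗ Coalgebra.comul)
    (hβ₂ : (Coalgebra.counit : (⨁ n, T n) →ₗ[k] k) ∘ₗ β = Coalgebra.counit)
    (h0 : DirectSum.component k ℕ T 0 ∘ₗ α = DirectSum.component k ℕ T 0 ∘ₗ β)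
    (h1 : DirectSum.component k ℕ T 1 ∘ₗ α = DirectSum.component k ℕ T 1 ∘ₗ β) :
    α = β := by
  have hzero : ∀ i j : ℕ, j ≠ i →
      (DirectSum.component k ℕ T i) ∘ₗ DirectSum.lof k ℕ T j = 0 := by
    intro i j hij
    ext x
    simp [DirectSum.component.of, hij]
  have hself : ∀ i : ℕ,
      (DirectSum.component k ℕ T i) ∘ₗ DirectSum.lof k ℕ T i = LinearMap.id := by
    intro i; ext x; simp
  -- The key structural identity
  have key : ∀ (a n : ℕ) (h : a = 1 + n),
      TensorProduct.map (DirectSum.component k ℕ T 1) (DirectSum.component k ℕ T n) ∘ₗ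
        (Coalgebra.comul (R := k) (A := ⨁ m, T m)) =
      Δab 1 n ∘ₗ (lcast k T h).toLinearMap ∘ₗ DirectSum.component k ℕ T a := by
    intro a n h
    subst h
    apply DirectSum.linearMap_ext
    intro m
    rw [LinearMap.comp_assoc, hgr m]
    ext x
    simp only [LinearMap.coe_comp, Function.comp_apply, LinearMap.coe_sum,
      Finset.sum_apply, map_sum]
    rcases eq_or_ne m (1 + n) with rfl | hm
    · rw [Finset.sum_eq_single_of_mem
        (⟨(1, n), by simp⟩ : {p // p ∈ Finset.HasAntidiagonal.antidiagonal (1 + n)})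
        (Finset.mem_attach _ _)]
      · have e1 : (lcast k T (Finset.HasAntidiagonal.mem_antidiagonal.mp
            (⟨(1, n), by simp⟩ : {p // p ∈ Finset.HasAntidiagonal.antidiagonal (1 + n)}).2).symm).toLinearMap
            = LinearMap.id := rfl
        have e2 : TensorProduct.map (DirectSum.component k ℕ T 1) (DirectSum.component k ℕ T n)
            ∘ₗ TensorProduct.map (DirectSum.lof k ℕ T 1) (DirectSum.lof k ℕ T n)
            = LinearMap.id := by
          rw [← TensorProduct.map_comp, hself, hself, TensorProduct.map_id]
        calc (TensorProduct.map (DirectSum.component k ℕ T 1) (DirectSum.component k ℕ T n))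
              ((TensorProduct.map (DirectSum.lof k ℕ T 1) (DirectSum.lof k ℕ T n))
                ((Δab 1 n) ((lcast k T _).toLinearMap x)))
            = LinearMap.id ((Δab 1 n) ((lcast k T _).toLinearMap x)) := by
              rw [← LinearMap.comp_apply, e2]
          _ = (Δab 1 n) ((lcast k T rfl).toLinearMap
              ((DirectSum.component k ℕ T (1 + n)) ((DirectSum.lof k ℕ T (1 + n)) x))) := by
              rw [e1]; simp
      · rintro ⟨⟨a, b⟩, hab⟩ - hne
        have hab' : a + b = 1 + n := Finset.HasAntidiagonal.mem_antidiagonal.mp hab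
        rcases eq_or_ne a 1 with rfl | ha
        · exfalso
          apply hne
          have : b = n := by omega
          subst this
          rfl
        · have hz : (DirectSum.component k ℕ T 1) ∘ₗ DirectSum.lof k ℕ T a = 0 := hzero 1 a ha
          rw [← LinearMap.comp_apply, ← TensorProduct.map_comp, hz,
            TensorProduct.map_zero_left, LinearMap.zero_apply]
    · have hrhs : (DirectSum.component k ℕ T (1 + n)) ((DirectSum.lof k ℕ T m) x) = 0 := by
        rw [← LinearMap.comp_apply, hzero _ _ hm, LinearMap.zero_apply]
      rw [hrhs]
      simp only [map_zero]
      apply Finset.sum_eq_zero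
      rintro ⟨⟨a, b⟩, hab⟩ -
      have hab' : a + b = m := Finset.HasAntidiagonal.mem_antidiagonal.mp hab
      rcases eq_or_ne a 1 with rfl | ha
      · have hb : b ≠ n := by omega
        have hz : (DirectSum.component k ℕ T n) ∘ₗ DirectSum.lof k ℕ T b = 0 := hzero n b hb
        rw [← LinearMap.comp_apply, ← TensorProduct.map_comp, hz,
          TensorProduct.map_zero_right, LinearMap.zero_apply]
      · have hz : (DirectSum.component k ℕ T 1) ∘ₗ DirectSum.lof k ℕ T a = 0 := hzero 1 a ha
        rw [← LinearMap.comp_apply, ← TensorProduct.map_comp, hz,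
          TensorProduct.map_zero_left, LinearMap.zero_apply]
  -- main induction
  have hall : ∀ n : ℕ,
      DirectSum.component k ℕ T n ∘ₗ α = DirectSum.component k ℕ T n ∘ₗ β := by
    intro n
    induction n with
    | zero => exact h0
    | succ m ih =>
      match m, ih with
      | 0, _ => exact h1
      | l + 1, ih =>
        have h : l + 1 + 1 = 1 + (l + 1) := by omega
        have hk := key (l + 2) (l + 1) h
        have HA : Δab 1 (l + 1) ∘ₗ (lcast k T h).toLinearMap ∘ₗ
              (DirectSum.component k ℕ T (l + 2) ∘ₗ α)
            = Δab 1 (l + 1) ∘ₗ (lcast k T h).toLinearMap ∘ₗ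
              (DirectSum.component k ℕ T (l + 2) ∘ₗ β) := by
          calc Δab 1 (l + 1) ∘ₗ (lcast k T h).toLinearMap ∘ₗ
                (DirectSum.component k ℕ T (l + 2) ∘ₗ α)
              = (Δab 1 (l + 1) ∘ₗ (lcast k T h).toLinearMap ∘ₗ
                  DirectSum.component k ℕ T (l + 2)) ∘ₗ α := by
                rw [LinearMap.comp_assoc, LinearMap.comp_assoc]
            _ = (TensorProduct.map (DirectSum.component k ℕ T 1)
                  (DirectSum.component k ℕ T (l + 1)) ∘ₗ Coalgebra.comul) ∘ₗ α := by rw [hk]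
            _ = TensorProduct.map (DirectSum.component k ℕ T 1 ∘ₗ α)
                  (DirectSum.component k ℕ T (l + 1) ∘ₗ α) ∘ₗ Coalgebra.comul := by
                rw [LinearMap.comp_assoc, hα₁, ← LinearMap.comp_assoc,
                  ← TensorProduct.map_comp]
            _ = TensorProduct.map (DirectSum.component k ℕ T 1 ∘ₗ β)
                  (DirectSum.component k ℕ T (l + 1) ∘ₗ β) ∘ₗ Coalgebra.comul := by
                rw [h1, ih]
            _ = (TensorProduct.map (DirectSum.component k ℕ T 1)
                  (DirectSum.component k ℕ T (l + 1)) ∘ₗ Coalgebra.comul) ∘ₗ β := by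
                rw [LinearMap.comp_assoc, hβ₁, ← LinearMap.comp_assoc,
                  ← TensorProduct.map_comp]
            _ = Δab 1 (l + 1) ∘ₗ (lcast k T h).toLinearMap ∘ₗ
                  (DirectSum.component k ℕ T (l + 2) ∘ₗ β) := by
                rw [hk, LinearMap.comp_assoc, LinearMap.comp_assoc]
        ext x
        have := LinearMap.congr_fun HA x
        simp only [LinearMap.comp_apply] at this ⊢
        exact (lcast k T h).injective ((hcot (l + 1)).1 this)
  ext x
  exact DFunLike.congr_fun (DirectSum.ext_component k fun n => LinearMap.congr_fun (hall n) x) _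
end
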